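/- arXiv:2112.14274 — 2 statements merged into one kernel-verified Lean document; each statement's English description precedes it below -/
import Mathlib

section
/- Let ℓ ∈ ℕ and let G : ℂ → ℂ be an entire function, not identically zero, satisfying G(β + 2iπ) = G(β), G(−β) = G(β), and |G(β)| ≤ C·cosh(ℓ·Re β) for some C > 0 and all β ∈ ℂ. Then there exist an integer k ≤ ℓ, a constant c ∈ ℂ, and complex numbers κ₁, …, κ_k such that G(β) = c · ∏_{a=1}^{k} sinh((β − κ_a)/2)·sinh((β + κ_a)/2) for all β ∈ ℂ. -/
/-! Periodicity makes `e^{ℓβ} G(β)` a holomorphic function of `q = e^β` on `ℂˣ`. The growth bound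
makes it bounded as `q → 0` and `O(|q|^{2ℓ})` as `q → ∞`, so it is a polynomial of degree `≤ 2ℓ`
in `q`. Hence `G` is a Laurent polynomial in `e^β` with exponents in `[-ℓ, ℓ]`, and evenness turns
it into a polynomial of degree `≤ ℓ` in `cosh β` (Chebyshev polynomials). Factor that polynomial
over `ℂ`, write each root as `cosh κ`, and use
`cosh β - cosh κ = 2 sinh ((β - κ) / 2) sinh ((β + κ) / 2)`. -/

open Complex Polynomial Filter Function Asymptotics

theorem Differentiable.exists_polynomial_of_norm_le_pow {f : ℂ → ℂ} (hf : Differentiable ℂ f)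
    {d : ℕ} {C : ℝ} (hbd : ∀ z, 1 ≤ ‖z‖ → ‖f z‖ ≤ C * ‖z‖ ^ d) :
    ∃ p : ℂ[X], p.natDegree ≤ d ∧ ∀ z, f z = p.eval z := by
  have hC : 0 ≤ C := by simpa using (norm_nonneg _).trans (hbd 1 (by simp))
  have hvanish : ∀ n, d < n → iteratedDeriv n f 0 = 0 := by
    intro n hn
    -- Cauchy's estimate on the circle of radius `R ≥ 1` gives `O(R ^ d / R ^ n) = O(1 / R)`.
    have hle : ∀ R : ℝ, 1 ≤ R → ‖iteratedDeriv n f 0‖ ≤ n.factorial * C / R := by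
      intro R hR
      have hR0 : 0 < R := one_pos.trans_le hR
      calc ‖iteratedDeriv n f 0‖ ≤ n.factorial * (C * R ^ d) / R ^ n :=
            Complex.norm_iteratedDeriv_le_of_forall_mem_sphere_norm_le n hR0 hf.diffContOnCl
              fun z hz => by
                rw [mem_sphere_zero_iff_norm] at hz
                simpa [hz] using hbd z (hz ▸ hR)
        _ ≤ n.factorial * C / R := by
            rw [div_le_div_iff₀ (by positivity) hR0, mul_assoc, mul_assoc, mul_assoc]
            gcongr
            calc R ^ d * R = R ^ (d + 1) := (pow_succ R d).symm
              _ ≤ R ^ n := pow_le_pow_right₀ hR hn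
    have hlim : Tendsto (fun R : ℝ => n.factorial * C / R) atTop (nhds 0) :=
      tendsto_const_nhds.div_atTop tendsto_id
    exact norm_le_zero_iff.mp (ge_of_tendsto hlim (eventually_atTop.2 ⟨1, hle⟩))
  set a : ℕ → ℂ := fun n => (n.factorial : ℂ)⁻¹ * iteratedDeriv n f 0
  refine ⟨∑ n ∈ Finset.range (d + 1), Polynomial.C (a n) * X ^ n, ?_, fun z => ?_⟩
  · refine natDegree_sum_le_of_forall_le _ _ fun n hn => ?_
    exact (natDegree_C_mul_X_pow_le _ _).trans (Nat.lt_succ_iff.mp (Finset.mem_range.mp hn))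
  · rw [← taylorSeries_eq_of_entire' 0 z hf, tsum_eq_sum (s := Finset.range (d + 1))]
    · simp [a, eval_finsetSum]
    · intro n hn
      simp [hvanish n (by simpa using hn)]

theorem Function.Periodic.exists_differentiable_comp_exp_eq {f : ℂ → ℂ}
    (hf : Differentiable ℂ f) (hper : Periodic f (2 * Real.pi * I))
    (hbd : BoundedAtFilter (comap re atBot) f) :
    ∃ Ψ : ℂ → ℂ, Differentiable ℂ Ψ ∧ ∀ β, Ψ (exp β) = f β := by
  have h2πI : (2 * Real.pi * I : ℂ) ≠ 0 := two_pi_I_ne_zero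
  -- `f` is a function of `q = exp β = 𝕢 1 (β / 2πi)`, the nome of the `1`-periodic `f (2πi ·)`.
  set g : ℂ → ℂ := fun z => f (2 * Real.pi * I * z)
  have hqParam (z : ℂ) : Periodic.qParam 1 z = exp (2 * Real.pi * I * z) := by
    simp [Periodic.qParam]
  have hg : Periodic g 1 := fun z => by simpa [g, mul_add] using hper (2 * Real.pi * I * z)
  have hgdiff : Differentiable ℂ g := hf.comp (differentiable_id.const_mul _)
  have hgbd : BoundedAtFilter (comap im atTop) g := by
    refine hbd.comp_tendsto (tendsto_comap_iff.2 ?_)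
    have hre : re ∘ (fun z : ℂ => 2 * Real.pi * I * z) = fun z => -(2 * Real.pi) * z.im := by
      ext z; simp
    rw [hre]
    exact (tendsto_comap.const_mul_atTop_of_neg (by linarith [Real.pi_pos]))
  refine ⟨Periodic.cuspFunction 1 g, fun q => ?_, fun β => ?_⟩
  · rcases eq_or_ne q 0 with rfl | hq
    · exact Periodic.differentiableAt_cuspFunction_zero one_pos hg
        (Eventually.of_forall hgdiff) hgbd
    · rw [← Periodic.qParam_right_inv one_ne_zero hq]
      exact Periodic.differentiableAt_cuspFunction one_ne_zero hg (hgdiff _)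
  · have := Periodic.eq_cuspFunction one_ne_zero hg (β / (2 * Real.pi * I))
    rw [hqParam, mul_div_cancel₀ _ h2πI] at this
    exact this.trans (congrArg f (mul_div_cancel₀ _ h2πI))

theorem Real.exp_mul_cosh (t : ℝ) : Real.exp t * Real.cosh t = (Real.exp (2 * t) + 1) / 2 := by
  rw [Real.cosh_eq, two_mul, Real.exp_add, Real.exp_neg]
  field_simp

theorem exists_polynomial_exp_mul_eq {ℓ : ℕ} {G : ℂ → ℂ} (hG : Differentiable ℂ G)
    (hper : Periodic G (2 * Real.pi * I)) {C : ℝ}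
    (hbd : ∀ β, ‖G β‖ ≤ C * Real.cosh (ℓ * β.re)) :
    ∃ p : ℂ[X], p.natDegree ≤ 2 * ℓ ∧ ∀ β, exp (ℓ * β) * G β = p.eval (exp β) := by
  have hC : 0 ≤ C := by simpa using (norm_nonneg _).trans (hbd 0)
  set f : ℂ → ℂ := fun β => exp (ℓ * β) * G β
  have hf_le (β : ℂ) : ‖f β‖ ≤ C * ((Real.exp (2 * (ℓ * β.re)) + 1) / 2) :=
    calc ‖f β‖ = Real.exp (ℓ * β.re) * ‖G β‖ := by simp [f, norm_exp]
      _ ≤ Real.exp (ℓ * β.re) * (C * Real.cosh (ℓ * β.re)) := by gcongr; exact hbd β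
      _ = C * ((Real.exp (2 * (ℓ * β.re)) + 1) / 2) := by rw [mul_left_comm, Real.exp_mul_cosh]
  have hf_per : Periodic f (2 * Real.pi * I) := fun β => by
    simp only [f, mul_add, exp_add, exp_nat_mul_two_pi_mul_I, mul_one, hper β]
  have hf_bdd : BoundedAtFilter (comap re atBot) f := by
    refine isBigO_iff.2 ⟨C, ?_⟩
    filter_upwards [preimage_mem_comap (Iic_mem_atBot 0)] with β hβ
    have : Real.exp (2 * (ℓ * β.re)) ≤ 1 :=
      Real.exp_le_one_iff.2 (by have : β.re ≤ 0 := hβ; nlinarith [ℓ.cast_nonneg (α := ℝ)])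
    refine (hf_le β).trans ?_
    simp only [Pi.one_apply, norm_one, mul_one]
    nlinarith
  obtain ⟨Ψ, hΨ, hΨf⟩ := hf_per.exists_differentiable_comp_exp_eq
    ((differentiable_id.const_mul _).cexp.mul hG) hf_bdd
  obtain ⟨p, hp, hΨp⟩ := hΨ.exists_polynomial_of_norm_le_pow (d := 2 * ℓ) (C := C) fun q hq => by
    have hq0 : q ≠ 0 := norm_pos_iff.1 (one_pos.trans_le hq)
    have hpow : Real.exp (2 * (ℓ * (log q).re)) = ‖q‖ ^ (2 * ℓ) := by
      rw [log_re, ← Real.rpow_natCast, Real.rpow_def_of_pos (norm_pos_iff.2 hq0)]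
      push_cast
      ring_nf
    have hone : 1 ≤ ‖q‖ ^ (2 * ℓ) := one_le_pow₀ hq
    rw [← exp_log hq0, hΨf]
    refine (hf_le _).trans ?_
    rw [hpow, exp_log hq0]
    nlinarith
  exact ⟨p, hp, fun β => (hΨf β).symm.trans (hΨp _)⟩

theorem exists_polynomial_cosh_eq_of_even {ℓ : ℕ} {G : ℂ → ℂ} (heven : ∀ β, G (-β) = G β)
    {p : ℂ[X]} (hp : p.natDegree ≤ 2 * ℓ) (hGp : ∀ β, exp (ℓ * β) * G β = p.eval (exp β)) :
    ∃ Q : ℂ[X], Q.natDegree ≤ ℓ ∧ ∀ β, G β = Q.eval (cosh β) := by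
  set m : ℕ → ℤ := fun n => n - ℓ
  have hG (β : ℂ) : G β = ∑ n ∈ Finset.range (2 * ℓ + 1), p.coeff n * exp (m n * β) := by
    rw [← mul_right_inj' (exp_ne_zero (ℓ * β)), hGp,
      eval_eq_sum_range' (n := 2 * ℓ + 1) (by omega), Finset.mul_sum]
    refine Finset.sum_congr rfl fun n _ => ?_
    rw [← exp_nat_mul, mul_left_comm, ← exp_add]
    congr 2
    simp only [m]
    push_cast
    ring
  -- Averaging over `β ↦ -β` turns each `exp (m β)` into `cosh (m β) = T_m (cosh β)`.
  refine ⟨∑ n ∈ Finset.range (2 * ℓ + 1), Polynomial.C (p.coeff n) * Chebyshev.T ℂ (m n),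
    natDegree_sum_le_of_forall_le _ _ fun n hn => ?_, fun β => ?_⟩
  · refine (natDegree_C_mul_le _ _).trans ?_
    rw [Chebyshev.natDegree_T]
    have := Finset.mem_range.1 hn
    simp only [m]
    omega
  · calc G β = (G β + G (-β)) / 2 := by rw [heven]; ring
      _ = ∑ n ∈ Finset.range (2 * ℓ + 1), p.coeff n * cosh (m n * β) := by
        rw [hG, hG, ← Finset.sum_add_distrib, Finset.sum_div]
        refine Finset.sum_congr rfl fun n _ => ?_
        rw [cosh, mul_neg]
        ring
      _ = _ := by simp [eval_finsetSum, Chebyshev.T_complex_cosh]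

theorem Complex.sinh_sub_div_two_mul_sinh_add_div_two (β κ : ℂ) :
    sinh ((β - κ) / 2) * sinh ((β + κ) / 2) = (cosh β - cosh κ) / 2 := by
  have hβ := cosh_add ((β + κ) / 2) ((β - κ) / 2)
  have hκ := cosh_sub ((β + κ) / 2) ((β - κ) / 2)
  rw [show (β + κ) / 2 + (β - κ) / 2 = β by ring] at hβ
  rw [show (β + κ) / 2 - (β - κ) / 2 = κ by ring] at hκ
  rw [hβ, hκ]
  ring

theorem Polynomial.exists_eval_eq_mul_prod_sub {K : Type*} [Field K] [IsAlgClosed K] (p : K[X]) :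
    ∃ (c : K) (r : Fin p.natDegree → K), ∀ x, p.eval x = c * ∏ a, (x - r a) := by
  have hsplits : p.Splits := IsAlgClosed.splits p
  set L := p.roots.toList
  have hL : L.length = p.natDegree := by
    rw [Multiset.length_toList, (splits_iff_card_roots).1 hsplits]
  refine ⟨p.leadingCoeff, fun a => L[Fin.cast hL.symm a], fun x => ?_⟩
  conv_lhs => rw [hsplits.eq_prod_roots, ← Multiset.coe_toList p.roots]
  rw [eval_mul, eval_C, eval_multiset_prod, Multiset.map_coe, Multiset.map_coe, Multiset.prod_coe,
    List.map_map, ← Fin.prod_univ_fun_getElem, ← (finCongr hL).prod_comp]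
  simp [L]

theorem Polynomial.exists_eval_cosh_eq_mul_prod_sinh (Q : ℂ[X]) :
    ∃ (c : ℂ) (κ : Fin Q.natDegree → ℂ), ∀ β,
      Q.eval (cosh β) = c * ∏ a, sinh ((β - κ a) / 2) * sinh ((β + κ a) / 2) := by
  obtain ⟨c, r, hr⟩ := Q.exists_eval_eq_mul_prod_sub
  have hcosh (w : ℂ) : cosh (surjInv cos_surjective w * I) = w := by
    rw [cosh_mul_I, surjInv_eq cos_surjective]
  refine ⟨c * 2 ^ Q.natDegree, fun a => surjInv cos_surjective (r a) * I, fun β => ?_⟩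
  simp only [Complex.sinh_sub_div_two_mul_sinh_add_div_two, hcosh, hr, mul_assoc,
    ← Fin.prod_const, ← Finset.prod_mul_distrib]
  congr 1
  refine Finset.prod_congr rfl fun a _ => ?_
  ring

theorem periodic_even_entire_factorisation_general (ℓ : ℕ) (G : ℂ → ℂ)
    (hG : Differentiable ℂ G)
    (hper : ∀ β : ℂ, G (β + 2 * (Real.pi : ℂ) * I) = G β)
    (heven : ∀ β : ℂ, G (-β) = G β)
    (hbd : ∃ C : ℝ, 0 < C ∧ ∀ β : ℂ, ‖G β‖ ≤ C * Real.cosh ((ℓ : ℝ) * β.re)) :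
    ∃ (k : ℕ) (_ : k ≤ ℓ) (c : ℂ) (κ : Fin k → ℂ),
      ∀ β : ℂ, G β = c * ∏ a : Fin k,
        Complex.sinh ((β - κ a) / 2) * Complex.sinh ((β + κ a) / 2) := by
  obtain ⟨C, -, hC⟩ := hbd
  obtain ⟨p, hp, hGp⟩ := exists_polynomial_exp_mul_eq hG hper hC
  obtain ⟨Q, hQ, hGQ⟩ := exists_polynomial_cosh_eq_of_even heven hp hGp
  obtain ⟨c, κ, hQκ⟩ := Q.exists_eval_cosh_eq_mul_prod_sinh
  exact ⟨Q.natDegree, hQ, c, κ, fun β => (hGQ β).trans (hQκ β)⟩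

/-- An entire, not identically zero, even, `2iπ`-periodic function bounded by
`C·cosh(ℓ·Re β)` is of the form
`c·∏_{a=1}^{k} sinh((β − κ_a)/2)·sinh((β + κ_a)/2)` with `k ≤ ℓ`. -/
theorem periodic_even_entire_factorisation (ℓ : ℕ) (G : ℂ → ℂ)
    (hG : Differentiable ℂ G) (hG0 : G ≠ 0)
    (hper : ∀ β : ℂ, G (β + 2 * (Real.pi : ℂ) * I) = G β)
    (heven : ∀ β : ℂ, G (-β) = G β)
    (hbd : ∃ C : ℝ, 0 < C ∧ ∀ β : ℂ, ‖G β‖ ≤ C * Real.cosh ((ℓ : ℝ) * β.re)) :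
    ∃ (k : ℕ) (_ : k ≤ ℓ) (c : ℂ) (κ : Fin k → ℂ),
      ∀ β : ℂ, G β = c * ∏ a : Fin k,
        Complex.sinh ((β - κ a) / 2) * Complex.sinh ((β + κ a) / 2) :=
  periodic_even_entire_factorisation_general ℓ G hG hper heven hbd
end

section
/- Let N ≥ 2, t ∈ [0,1], and let μ, ν be Borel probability measures on ℝ such that ∫ V_N dμ < ∞, ∫ V_N dν < ∞, and such that the double integrals of |w_N(s−u)| and |w_{tot;N}(s−u)| against each of μ⊗μ, ν⊗ν, μ⊗ν are finite. Then, setting σ^{(+)} = tν + (1−t)μ and σ^{(−)} = tν − (1−t)μ, one has the exact decomposition E_{N,t}[μ,ν] = E_N^{(+)}[σ^{(+)}] + E_N^{(−)}[σ^{(−)}]. -/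
noncomputable section

open Complex MeasureTheory Filter Topology
open scoped ENNReal NNReal

/-- `V_N(λ) = κ cosh((ln N)λ)`. -/
def VN (κ : ℝ) (N : ℕ) (lam : ℝ) : ℝ := κ * Real.cosh (Real.log N * lam)

/-- `v(λ) = ln(1 + sin²(2πb)/sinh²λ)`. -/
def vFun (b lam : ℝ) : ℝ :=
  Real.log (1 + Real.sin (2 * Real.pi * b) ^ 2 / Real.sinh lam ^ 2)

lemma smul_prod_meas {α β : Type*} [MeasurableSpace α] [MeasurableSpace β]
    (c : ℝ≥0∞) (μ : Measure α) (ν : Measure β) [SFinite μ] [SFinite ν] :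
    (c • μ).prod ν = c • μ.prod ν := by
  ext s hs
  rw [Measure.prod_apply hs, Measure.smul_apply, Measure.prod_apply hs,
    lintegral_smul_measure, smul_eq_mul]

lemma prod_smul_meas {α β : Type*} [MeasurableSpace α] [MeasurableSpace β]
    (c : ℝ≥0∞) (μ : Measure α) (ν : Measure β) [SFinite μ] [SFinite ν] :
    μ.prod (c • ν) = c • μ.prod ν := by
  ext s hs
  rw [Measure.prod_apply hs, Measure.smul_apply, Measure.prod_apply hs]
  simp_rw [Measure.smul_apply, smul_eq_mul]
  rw [lintegral_const_mul _ (measurable_measure_prodMk_left hs)]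

/-- Decomposition `E_{N,t}[μ,ν] = E_N^{(+)}[σ^{(+)}] + E_N^{(−)}[σ^{(−)}]`, where
`σ^{(±)} = tν ± (1−t)μ`, under the integrability assumptions making all the integrals
finite.  Here `w_N(u) = w(τ_N u)`, `w_{tot;N} = w_N + v_N`,
`w_N^{(+)} = w_N + (1/2)v_N`, `w_N^{(−)} = −(1/2)v_N`, `τ_N = ln N`, and
`E_N^{(−)}[σ^{(−)}]` is written out through the bilinear expansion of the signed
measure `σ^{(−)} = tν − (1−t)μ`. -/
theorem EFun_decomposition (b : ℝ) (hb0 : 0 < b) (hb1 : b < 1 / 2) (κ : ℝ) (hκ : 0 < κ)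
    (w : ℝ → ℝ)
    (hw : ∀ lam : ℝ, lam ≠ 0 →
      Tendsto (fun T : ℝ => -8 * ∫ x in (0 : ℝ)..T,
          Real.sinh (x * b) * Real.sinh (x * (1 / 2 - b)) * Real.sinh (x / 2) *
            Real.cosh x / (x * Real.sinh x ^ 2) * Real.cos (x * lam / Real.pi))
        atTop (𝓝 (w lam)))
    (hweven : ∀ lam : ℝ, w (-lam) = w lam)
    (N : ℕ) (hN : 2 ≤ N) (t : ℝ) (ht0 : 0 ≤ t) (ht1 : t ≤ 1)
    (μ ν : MeasureTheory.Measure ℝ)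
    (hμ : IsProbabilityMeasure μ) (hν : IsProbabilityMeasure ν)
    (hVμ : Integrable (VN κ N) μ) (hVν : Integrable (VN κ N) ν)
    (hwμμ : Integrable (fun x : ℝ × ℝ => w (Real.log N * (x.1 - x.2))) (μ.prod μ))
    (hwνν : Integrable (fun x : ℝ × ℝ => w (Real.log N * (x.1 - x.2))) (ν.prod ν))
    (hwμν : Integrable (fun x : ℝ × ℝ => w (Real.log N * (x.1 - x.2))) (μ.prod ν))
    (hwtotμμ : Integrable (fun x : ℝ × ℝ =>
      w (Real.log N * (x.1 - x.2)) + vFun b (Real.log N * (x.1 - x.2))) (μ.prod μ))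
    (hwtotνν : Integrable (fun x : ℝ × ℝ =>
      w (Real.log N * (x.1 - x.2)) + vFun b (Real.log N * (x.1 - x.2))) (ν.prod ν))
    (hwtotμν : Integrable (fun x : ℝ × ℝ =>
      w (Real.log N * (x.1 - x.2)) + vFun b (Real.log N * (x.1 - x.2))) (μ.prod ν)) :
    (1 / (N : ℝ)) * (t * (∫ s, VN κ N s ∂ν) + (1 - t) * ∫ s, VN κ N s ∂μ) -
      (t ^ 2 / 2) * (∫ x : ℝ × ℝ, w (Real.log N * (x.1 - x.2)) ∂(ν.prod ν)) -
      ((1 - t) ^ 2 / 2) * (∫ x : ℝ × ℝ, w (Real.log N * (x.1 - x.2)) ∂(μ.prod μ)) -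
      (t * (1 - t)) * (∫ x : ℝ × ℝ,
        (w (Real.log N * (x.1 - x.2)) + vFun b (Real.log N * (x.1 - x.2))) ∂(μ.prod ν))
    =
    -- E_N^{(+)}[σ^{(+)}] with σ^{(+)} = tν + (1−t)μ
    ((1 / (N : ℝ)) * (∫ s, VN κ N s
        ∂(ENNReal.ofReal t • ν + ENNReal.ofReal (1 - t) • μ)) -
      (1 / 2) * (∫ x : ℝ × ℝ,
        (w (Real.log N * (x.1 - x.2)) + (1 / 2) * vFun b (Real.log N * (x.1 - x.2)))
        ∂((ENNReal.ofReal t • ν + ENNReal.ofReal (1 - t) • μ).prod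
            (ENNReal.ofReal t • ν + ENNReal.ofReal (1 - t) • μ)))) +
    -- E_N^{(−)}[σ^{(−)}] with σ^{(−)} = tν − (1−t)μ, expanded bilinearly
    (-(1 / 2) * (t ^ 2 * (∫ x : ℝ × ℝ,
          (-(1 / 2) * vFun b (Real.log N * (x.1 - x.2))) ∂(ν.prod ν)) +
        (1 - t) ^ 2 * (∫ x : ℝ × ℝ,
          (-(1 / 2) * vFun b (Real.log N * (x.1 - x.2))) ∂(μ.prod μ)) -
        2 * (t * (1 - t)) * (∫ x : ℝ × ℝ,
          (-(1 / 2) * vFun b (Real.log N * (x.1 - x.2))) ∂(ν.prod μ)))) := by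
  have ht1' : (0:ℝ) ≤ 1 - t := by linarith
  have hτ : ∀ (f : ℝ → ℝ), (∀ l, f (-l) = f l) → ∀ p : ℝ × ℝ,
      f (Real.log N * (p.2 - p.1)) = f (Real.log N * (p.1 - p.2)) := by
    intro f hf p
    rw [show Real.log N * (p.2 - p.1) = -(Real.log N * (p.1 - p.2)) by ring, hf]
  have hveven : ∀ l, vFun b (-l) = vFun b l := by
    intro l; unfold vFun; rw [Real.sinh_neg, neg_sq]
  -- integrability of v against the product measures
  have hvμμ : Integrable (fun x : ℝ × ℝ => vFun b (Real.log N * (x.1 - x.2))) (μ.prod μ) := by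
    have h := hwtotμμ.sub hwμμ
    have e : ((fun x : ℝ × ℝ => w (Real.log N * (x.1 - x.2)) + vFun b (Real.log N * (x.1 - x.2)))
        - fun x : ℝ × ℝ => w (Real.log N * (x.1 - x.2)))
        = fun x : ℝ × ℝ => vFun b (Real.log N * (x.1 - x.2)) := by
      funext x; simp
    rwa [e] at h
  have hvνν : Integrable (fun x : ℝ × ℝ => vFun b (Real.log N * (x.1 - x.2))) (ν.prod ν) := by
    have h := hwtotνν.sub hwνν
    have e : ((fun x : ℝ × ℝ => w (Real.log N * (x.1 - x.2)) + vFun b (Real.log N * (x.1 - x.2)))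
        - fun x : ℝ × ℝ => w (Real.log N * (x.1 - x.2)))
        = fun x : ℝ × ℝ => vFun b (Real.log N * (x.1 - x.2)) := by
      funext x; simp
    rwa [e] at h
  have hvμν : Integrable (fun x : ℝ × ℝ => vFun b (Real.log N * (x.1 - x.2))) (μ.prod ν) := by
    have h := hwtotμν.sub hwμν
    have e : ((fun x : ℝ × ℝ => w (Real.log N * (x.1 - x.2)) + vFun b (Real.log N * (x.1 - x.2)))
        - fun x : ℝ × ℝ => w (Real.log N * (x.1 - x.2)))
        = fun x : ℝ × ℝ => vFun b (Real.log N * (x.1 - x.2)) := by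
      funext x; simp
    rwa [e] at h
  -- swap versions
  have hswapfun : ∀ (f : ℝ → ℝ), (∀ l, f (-l) = f l) →
      ((fun x : ℝ × ℝ => f (Real.log N * (x.1 - x.2))) ∘ Prod.swap)
        = fun x : ℝ × ℝ => f (Real.log N * (x.1 - x.2)) := by
    intro f hf; funext p
    simp only [Function.comp_apply, Prod.swap]
    exact hτ f hf p
  have hwνμ : Integrable (fun x : ℝ × ℝ => w (Real.log N * (x.1 - x.2))) (ν.prod μ) := by
    have h := hwμν.swap
    rwa [hswapfun w hweven] at h
  have hvνμ : Integrable (fun x : ℝ × ℝ => vFun b (Real.log N * (x.1 - x.2))) (ν.prod μ) := by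
    have h := hvμν.swap
    rwa [hswapfun (vFun b) hveven] at h
  -- swapping the integrals
  have hswapint : ∀ (f : ℝ → ℝ), (∀ l, f (-l) = f l) →
      Integrable (fun x : ℝ × ℝ => f (Real.log N * (x.1 - x.2))) (μ.prod ν) →
      (∫ x : ℝ × ℝ, f (Real.log N * (x.1 - x.2)) ∂(ν.prod μ))
        = ∫ x : ℝ × ℝ, f (Real.log N * (x.1 - x.2)) ∂(μ.prod ν) := by
    intro f hf _
    have h := integral_prod_swap (μ := μ) (ν := ν)
      (fun x : ℝ × ℝ => f (Real.log N * (x.1 - x.2)))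
    rw [← h]
    congr 1
    funext z
    simp only [Prod.fst_swap, Prod.snd_swap]
    exact (hτ f hf z).symm
  have hwint : (∫ x : ℝ × ℝ, w (Real.log N * (x.1 - x.2)) ∂(ν.prod μ))
      = ∫ x : ℝ × ℝ, w (Real.log N * (x.1 - x.2)) ∂(μ.prod ν) :=
    hswapint w hweven hwμν
  have hvint : (∫ x : ℝ × ℝ, vFun b (Real.log N * (x.1 - x.2)) ∂(ν.prod μ))
      = ∫ x : ℝ × ℝ, vFun b (Real.log N * (x.1 - x.2)) ∂(μ.prod ν) :=
    hswapint (vFun b) hveven hvμν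
  -- the combined measure
  set a : ℝ≥0∞ := ENNReal.ofReal t with ha
  set a' : ℝ≥0∞ := ENNReal.ofReal (1 - t) with ha'
  have hat : a.toReal = t := ENNReal.toReal_ofReal ht0
  have hat' : a'.toReal = 1 - t := ENNReal.toReal_ofReal ht1'
  have hane : a ≠ ∞ := ENNReal.ofReal_ne_top
  have hane' : a' ≠ ∞ := ENNReal.ofReal_ne_top
  -- the single integral over σ⁺
  have hEV : (∫ s, VN κ N s ∂(a • ν + a' • μ))
      = t * (∫ s, VN κ N s ∂ν) + (1 - t) * ∫ s, VN κ N s ∂μ := by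
    rw [integral_add_measure (hVν.smul_measure hane) (hVμ.smul_measure hane'),
      integral_smul_measure, integral_smul_measure, hat, hat', smul_eq_mul, smul_eq_mul]
  -- decomposition of the product measure
  have hσ2 : (a • ν + a' • μ).prod (a • ν + a' • μ)
      = (a • (a • ν.prod ν + a' • ν.prod μ)) + (a' • (a • μ.prod ν + a' • μ.prod μ)) := by
    rw [Measure.add_prod, smul_prod_meas, smul_prod_meas, Measure.prod_add,
      Measure.prod_add, prod_smul_meas, prod_smul_meas, prod_smul_meas, prod_smul_meas]
  -- the integrand of E⁺
  set F : ℝ × ℝ → ℝ := fun x : ℝ × ℝ =>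
    w (Real.log N * (x.1 - x.2)) + 1 / 2 * vFun b (Real.log N * (x.1 - x.2)) with hF
  have hFνν : Integrable F (ν.prod ν) := hwνν.add (hvνν.const_mul (1 / 2))
  have hFμμ : Integrable F (μ.prod μ) := hwμμ.add (hvμμ.const_mul (1 / 2))
  have hFμν : Integrable F (μ.prod ν) := hwμν.add (hvμν.const_mul (1 / 2))
  have hFνμ : Integrable F (ν.prod μ) := hwνμ.add (hvνμ.const_mul (1 / 2))
  have hsplit : ∀ (m : Measure (ℝ × ℝ)),
      Integrable (fun x : ℝ × ℝ => w (Real.log N * (x.1 - x.2))) m →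
      Integrable (fun x : ℝ × ℝ => vFun b (Real.log N * (x.1 - x.2))) m →
      (∫ x, F x ∂m) = (∫ x : ℝ × ℝ, w (Real.log N * (x.1 - x.2)) ∂m)
        + 1 / 2 * ∫ x : ℝ × ℝ, vFun b (Real.log N * (x.1 - x.2)) ∂m := by
    intro m h1 h2
    rw [hF, integral_add h1 (h2.const_mul (1 / 2)), integral_const_mul]
  -- the product integral over σ⁺
  have hEF : (∫ x, F x ∂((a • ν + a' • μ).prod (a • ν + a' • μ)))
      = t * (t * (∫ x, F x ∂(ν.prod ν)) + (1 - t) * ∫ x, F x ∂(ν.prod μ))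
        + (1 - t) * (t * (∫ x, F x ∂(μ.prod ν)) + (1 - t) * ∫ x, F x ∂(μ.prod μ)) := by
    rw [hσ2,
      integral_add_measure
        (((hFνν.smul_measure hane).add_measure (hFνμ.smul_measure hane')).smul_measure hane)
        (((hFμν.smul_measure hane).add_measure (hFμμ.smul_measure hane')).smul_measure hane'),
      integral_smul_measure, integral_smul_measure,
      integral_add_measure (hFνν.smul_measure hane) (hFνμ.smul_measure hane'),
      integral_add_measure (hFμν.smul_measure hane) (hFμμ.smul_measure hane'),
      integral_smul_measure, integral_smul_measure, integral_smul_measure,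
      integral_smul_measure, hat, hat']
    simp [smul_eq_mul]
  rw [hEV, hEF,
    hsplit (ν.prod ν) hwνν hvνν, hsplit (μ.prod μ) hwμμ hvμμ,
    hsplit (μ.prod ν) hwμν hvμν, hsplit (ν.prod μ) hwνμ hvνμ,
    hwint, hvint,
    integral_add hwμν hvμν,
    integral_const_mul, integral_const_mul, integral_const_mul, hvint]
  ring
end
end
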